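/- arXiv:2602.03777 — 4 statements merged into one kernel-verified Lean document; each statement's English description precedes it below -/
import Mathlib

section
/- For all production context stacks C₁, C₂ ∈ 𝒞 and every action a ∈ A, if head(C₁) = head(C₂) then f_aErr(C₁, a) = f_aErr(C₂, a); that is, the set of violations produced by executing an action depends only on the head of the production context stack. -/
/-!
Common model: Neverlang semantic-action verification (nlgcheck).

A production context is a pair `(k, m)` with `k ∈ ℕ` and `m : ℕ × I ⇀ T` a
partial attribute map (modeled as `ℕ × I → Option T`).  A production context
stack is a *nonempty* list `c₀ … c_n` of production contexts (with `c_n` the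
top); it is modeled as the pair of its top element `c_n` and the list of the
remaining elements `[c_{n-1}, …, c₀]` (top-first order).
-/

/-- Attribute maps: partial maps from (position, attribute name) to types. -/
abbrev AttrMap (I T : Type) := ℕ × I → Option T

/-- A production context: a position `k` together with an attribute map `m`. -/
abbrev ProdCtx (I T : Type) := ℕ × AttrMap I T

/-- A nonempty production context stack: the top context `c_n` together with
the list `[c_{n-1}, …, c₀]` of the contexts below it. -/
abbrev Stk (I T : Type) := ProdCtx I T × List (ProdCtx I T)

/-- CFG node actions. -/
inductive Act (I T : Type) : Type where
  | writeAttr (i : ℕ) (η : I) (t : T)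
  | readAttr (i : ℕ) (η : I) (t : T)
  | copyAttr (iDst : ℕ) (ηDst : I) (iSrc : ℕ) (ηSrc : I)
  | checkAttrType (i : ℕ) (η : I) (t : T)
  | propagateAttrs
  | beginEvalMetaAction (i : ℕ)
  | endEvalMetaAction
  | enterCtx (i : ℕ)
  | leaveCtx
  | nop
  | ignoreBranchAction

/-- Violations. -/
inductive Viol (I T : Type) : Type where
  | missingAttr (i : ℕ) (η : I)
  | badAttrT (i : ℕ) (η : I) (tReq : T) (tProv : T)
  | attrTypeDynamicallyChecked (i : ℕ) (η : I) (t : T)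

variable {I T : Type} [DecidableEq I]

/-- Update an attribute map at key `(i, η)` with value `t`. -/
def updMap (m : AttrMap I T) (i : ℕ) (η : I) (t : T) : AttrMap I T :=
  fun p => if p = (i, η) then some t else m p

/-- `get(C, i, η)` is `m_n(i, η)` when `i ≥ 1` or `C = c₀`, and is
`m_{n-1}(k_n, η)` when `i = 0` and `n ≥ 1`. -/
def getA : Stk I T → ℕ → I → Option T
  | (c, []), i, η => c.2 (i, η)
  | (c, c' :: _), i, η => if i = 0 then c'.2 (c.1, η) else c.2 (i, η)

/-- `put(C, i, η, t)` updates `m_n` with `(i, η) ↦ t` when `i ≥ 1` or `C = c₀`,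
and updates `m_{n-1}` with `(k_n, η) ↦ t` when `i = 0` and `n ≥ 1`. -/
def putA : Stk I T → ℕ → I → T → Stk I T
  | (c, []), i, η, t => ((c.1, updMap c.2 i η t), [])
  | (c, c' :: rest), i, η, t =>
      if i = 0 then (c, (c'.1, updMap c'.2 c.1 η t) :: rest)
      else ((c.1, updMap c.2 i η t), c' :: rest)

/-- Push a production context onto the stack. -/
def pushA (C : Stk I T) (c : ProdCtx I T) : Stk I T := (c, C.1 :: C.2)

/-- Pop the top production context off the stack (identity on a singleton
stack, which never occurs in well-formed executions). -/
def popA : Stk I T → Stk I T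
  | (c, []) => (c, [])
  | (_, c' :: rest) => (c', rest)

/-- `getAll(C, i)`: all the name/type attribute pairs at position `i` of the
current node, as a partial map from names to types. -/
def getAllA (C : Stk I T) (i : ℕ) : I → Option T := fun η => getA C i η

/-- `merge(m, X, j)`: add every pair of `X` at position `j` into `m` without
overwriting existing keys. -/
def mergeMap (m : AttrMap I T) (j : ℕ) (X : I → Option T) : AttrMap I T :=
  fun p =>
    if p.1 = j then
      match m p with
      | some t => some t
      | none => X p.2
    else m p

/-- `putAll(C, i, X)`: add each pair of `X` at position `i` (resp. at `k_n` in
`m_{n-1}` when `i = 0` and `n ≥ 1`), without overwriting existing keys. -/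
def putAllA : Stk I T → ℕ → (I → Option T) → Stk I T
  | (c, []), i, X => ((c.1, mergeMap c.2 i X), [])
  | (c, c' :: rest), i, X =>
      if i = 0 then (c, (c'.1, mergeMap c'.2 c.1 X) :: rest)
      else ((c.1, mergeMap c.2 i X), c' :: rest)

/-- The head of a production context stack:
`head(C) = m₀` if `C = c₀`, and
`head(C) = m_n ∪ {(0, η) ↦ t : m_{n-1}(k_n, η) = t}` if `n ≥ 1`
(the entries at position `0` come from `m_{n-1}` at key `(k_n, ·)`; the entries
at positions `i ≥ 1` come from `m_n`). -/
def headC : Stk I T → AttrMap I T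
  | (c, []) => c.2
  | (c, c' :: _) => fun p => if p.1 = 0 then c'.2 (c.1, p.2) else c.2 p

/-- A production context with empty attribute map, at position `i`. -/
def emptyCtx (i : ℕ) : ProdCtx I T := (i, fun _ => none)

/-- `f_aCtx`: the context-transformation component of the action semantics
`f_action`. -/
def fACtx (C : Stk I T) : Act I T → Stk I T
  | .writeAttr i η t => putA C i η t
  | .copyAttr iDst ηDst iSrc ηSrc =>
      match getA C iSrc ηSrc with
      | none => C
      | some t => putA C iDst ηDst t
  | .propagateAttrs => putAllA C 0 (getAllA C 1)
  | .enterCtx i => pushA C (emptyCtx i)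
  | .leaveCtx => popA C
  | _ => C

/-- `f_aErr`: the violation component of the action semantics `f_action`,
relative to a (decidable) subtyping relation `sub`. -/
def fAErr (sub : T → T → Prop) [DecidableRel sub] (C : Stk I T) :
    Act I T → Set (Viol I T)
  | .readAttr i η t =>
      match getA C i η with
      | none => {Viol.missingAttr i η}
      | some tp => if sub tp t then ∅ else {Viol.badAttrT i η t tp}
  | .copyAttr _ _ iSrc ηSrc =>
      match getA C iSrc ηSrc with
      | none => {Viol.missingAttr iSrc ηSrc}
      | some _ => ∅
  | .checkAttrType i η t => {Viol.attrTypeDynamicallyChecked i η t}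
  | _ => ∅

/-- `f_action`: maps a production context stack and an action to a new
production context stack and a set of violations. -/
def fAction (sub : T → T → Prop) [DecidableRel sub] (C : Stk I T)
    (a : Act I T) : Stk I T × Set (Viol I T) :=
  (fACtx C a, fAErr sub C a)

variable {V : Type}

/-- `f_pCtx`: overall change to the production context stack along a path
(a list of CFG vertices), given the labeling `a_node`. -/
def fPCtx (aNode : V → Act I T) : List V → Stk I T → Stk I T
  | [], C => C
  | v :: w', C => fPCtx aNode w' (fACtx C (aNode v))

/-- `f_pErr`: the set of violations detected at the last node of a path:
`f_pErr(ε, C) = ∅` and `f_pErr(w'·v, C) = f_aErr(f_pCtx(w', C), a_node(v))`. -/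
def fPErr (sub : T → T → Prop) [DecidableRel sub] (aNode : V → Act I T)
    (w : List V) (C : Stk I T) : Set (Viol I T) :=
  match w.getLast? with
  | none => ∅
  | some v => fAErr sub (fPCtx aNode w.dropLast C) (aNode v)

/-- `A_pb`: prefixes of balanced action sequences. -/
inductive IsBalPrefix : List (Act I T) → Prop where
  | nil : IsBalPrefix []
  | cons {b : List (Act I T)} (a : Act I T) (hb : IsBalPrefix b)
      (ha : a ≠ .leaveCtx) : IsBalPrefix (a :: b)
  | snoc {b : List (Act I T)} (a : Act I T) (hb : IsBalPrefix b)
      (ha : a ≠ .leaveCtx) : IsBalPrefix (b ++ [a])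
  | wrap {b : List (Act I T)} (i : ℕ) (hb : IsBalPrefix b) :
      IsBalPrefix (.enterCtx i :: (b ++ [.leaveCtx]))

/-- An action is neither a `CopyAttr` nor a `PropagateAttrs`. -/
def NotCopyProp (a : Act I T) : Prop :=
  (∀ iDst ηDst iSrc ηSrc, a ≠ .copyAttr iDst ηDst iSrc ηSrc) ∧
    a ≠ .propagateAttrs

/-- `top_k(c₀ … c_n)`: the `k` topmost items of the stack (topmost first). -/
def topk (k : ℕ) (C : Stk I T) : List (ProdCtx I T) := (C.1 :: C.2).take k

lemma getA_eq_headC (C : Stk I T) (i : ℕ) (η : I) :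
    getA C i η = headC C (i, η) := by
  obtain ⟨c, rest⟩ := C
  cases rest with
  | nil => rfl
  | cons c' r => simp [getA, headC]

/-- Property 3: the set of violations produced by executing
an action depends only on the head of the production context stack:
for all `C₁, C₂ ∈ 𝒞` and every action `a ∈ A`, if `head(C₁) = head(C₂)` then
`f_aErr(C₁, a) = f_aErr(C₂, a)`. -/
theorem fAErr_depends_only_on_head (sub : T → T → Prop) [DecidableRel sub]
    (hsubRefl : ∀ t : T, sub t t)
    (C₁ C₂ : Stk I T) (a : Act I T) (h : headC C₁ = headC C₂) :
    (fAction sub C₁ a).2 = (fAction sub C₂ a).2 := by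
  have hg : ∀ i η, getA C₁ i η = getA C₂ i η := fun i η => by
    rw [getA_eq_headC, getA_eq_headC, h]
  cases a <;> simp [fAction, fAErr, hg]
end

section
/- For all production context stacks C₁, C₂ ∈ 𝒞, every position i ∈ ℕ, attribute name η ∈ I, and type t ∈ T: if head(C₁) = head(C₂), then head(put(C₁, i, η, t)) = head(put(C₂, i, η, t)). -/
variable {I T : Type} [DecidableEq I]

variable {V : Type}

lemma head_putA (C : Stk I T) (i : ℕ) (η : I) (t : T) :
    headC (putA C i η t) = updMap (headC C) i η t := by
  obtain ⟨c, rest⟩ := C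
  cases rest with
  | nil => rfl
  | cons c' rest =>
    by_cases hi : i = 0 <;> funext p <;> obtain ⟨p1, p2⟩ := p <;>
      simp [putA, headC, updMap, hi, Prod.ext_iff] <;>
      rcases eq_or_ne p1 0 with h0 | h0 <;>
      rcases eq_or_ne p2 η with hη | hη <;>
      simp_all [eq_comm]

/-- for all production context stacks `C₁, C₂ ∈ 𝒞`, every
position `i ∈ ℕ`, attribute name `η ∈ I`, and type `t ∈ T`: if
`head(C₁) = head(C₂)`, then `head(put(C₁, i, η, t)) = head(put(C₂, i, η, t))`. -/
theorem head_put_congr (C₁ C₂ : Stk I T) (i : ℕ) (η : I) (t : T)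
    (h : headC C₁ = headC C₂) :
    headC (putA C₁ i η t) = headC (putA C₂ i η t) := by
  simp [head_putA, h]
end

section
/- Let v_sep be a vertex labeled a_node(v_sep) = EnterCtx(i) for some i ∈ ℕ, and let w be a balanced path prefix containing no vertex labeled CopyAttr or PropagateAttrs. Then for ALL production context stacks C₁, C₂ ∈ 𝒞 (with no hypothesis relating C₁ and C₂), head(f_pCtx(v_sep·w·v_sep, C₁)) = head(f_pCtx(v_sep·w·v_sep, C₂)). -/
variable {I T : Type} [DecidableEq I]

variable {V : Type}

/-- Run a list of actions on a stack. -/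
def runActs : List (Act I T) → Stk I T → Stk I T
  | [], C => C
  | a :: b, C => runActs b (fACtx C a)

lemma runActs_append (b₁ b₂ : List (Act I T)) (C : Stk I T) :
    runActs (b₁ ++ b₂) C = runActs b₂ (runActs b₁ C) := by
  induction b₁ generalizing C with
  | nil => rfl
  | cons a b ih => simp [runActs, ih]

lemma fPCtx_eq_runActs (aNode : V → Act I T) (w : List V) (C : Stk I T) :
    fPCtx aNode w C = runActs (w.map aNode) C := by
  induction w generalizing C with
  | nil => rfl
  | cons v w ih => simp [fPCtx, runActs, ih]

/-- Key invariant: running a balanced prefix without copy/propagate on a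
stack whose rest is nonempty produces a stack whose top and "region" depend
only on the actions and the initial top, while the first element of the rest
is only modified through a (region-determined) map transformation. -/
lemma key_runActs {b : List (Act I T)} (hbal : IsBalPrefix b) :
    (∀ a ∈ b, NotCopyProp a) →
    ∀ t : ProdCtx I T, ∃ (t' : ProdCtx I T) (l : List (ProdCtx I T))
      (g : AttrMap I T → AttrMap I T),
      ∀ (h : ProdCtx I T) (r : List (ProdCtx I T)),
        runActs b (t, h :: r) = (t', l ++ (h.1, g h.2) :: r) := by
  induction hbal with
  | nil => exact fun _ t => ⟨t, [], id, fun h r => rfl⟩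
  | @cons b a hb ha ih =>
    intro hncp t
    have hncpb : ∀ x ∈ b, NotCopyProp x := fun x hx =>
      hncp x (List.mem_cons_of_mem _ hx)
    have hrun : ∀ S : Stk I T, runActs (a :: b) S = runActs b (fACtx S a) :=
      fun S => rfl
    cases a with
    | writeAttr i η tt =>
      cases i with
      | zero =>
        obtain ⟨t', l, g, H⟩ := ih hncpb t
        refine ⟨t', l, fun m => g (updMap m t.1 η tt), fun h r => ?_⟩
        rw [hrun]
        have e : fACtx (t, h :: r) (.writeAttr 0 η tt)
            = (t, (h.1, updMap h.2 t.1 η tt) :: r) := by simp [fACtx, putA]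
        rw [e]
        exact H (h.1, updMap h.2 t.1 η tt) r
      | succ n =>
        obtain ⟨t', l, g, H⟩ := ih hncpb (t.1, updMap t.2 (n+1) η tt)
        refine ⟨t', l, g, fun h r => ?_⟩
        rw [hrun]
        have e : fACtx (t, h :: r) (.writeAttr (n+1) η tt)
            = ((t.1, updMap t.2 (n+1) η tt), h :: r) := by simp [fACtx, putA]
        rw [e]
        exact H h r
    | readAttr i η tt =>
      obtain ⟨t', l, g, H⟩ := ih hncpb t
      exact ⟨t', l, g, fun h r => H h r⟩
    | copyAttr i1 η1 i2 η2 =>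
      exact absurd rfl ((hncp _ List.mem_cons_self).1 _ _ _ _)
    | checkAttrType i η tt =>
      obtain ⟨t', l, g, H⟩ := ih hncpb t
      exact ⟨t', l, g, fun h r => H h r⟩
    | propagateAttrs =>
      exact absurd rfl ((hncp _ List.mem_cons_self).2)
    | beginEvalMetaAction j =>
      obtain ⟨t', l, g, H⟩ := ih hncpb t
      exact ⟨t', l, g, fun h r => H h r⟩
    | endEvalMetaAction =>
      obtain ⟨t', l, g, H⟩ := ih hncpb t
      exact ⟨t', l, g, fun h r => H h r⟩
    | enterCtx j =>
      obtain ⟨t', l, g, H⟩ := ih hncpb (emptyCtx j)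
      refine ⟨t', l ++ [(t.1, g t.2)], id, fun h r => ?_⟩
      rw [hrun]
      have e : fACtx (t, h :: r) (.enterCtx j) = (emptyCtx j, t :: h :: r) := rfl
      rw [e, H t (h :: r)]
      simp
    | leaveCtx => exact (ha rfl).elim
    | nop =>
      obtain ⟨t', l, g, H⟩ := ih hncpb t
      exact ⟨t', l, g, fun h r => H h r⟩
    | ignoreBranchAction =>
      obtain ⟨t', l, g, H⟩ := ih hncpb t
      exact ⟨t', l, g, fun h r => H h r⟩
  | @snoc b a hb ha ih =>
    intro hncp t
    have hncpb : ∀ x ∈ b, NotCopyProp x := fun x hx => hncp x (by simp [hx])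
    obtain ⟨t', l, g, H⟩ := ih hncpb t
    have hrun : ∀ S : Stk I T, runActs (b ++ [a]) S = fACtx (runActs b S) a :=
      fun S => by rw [runActs_append]; rfl
    cases a with
    | writeAttr i η tt =>
      cases i with
      | zero =>
        cases l with
        | nil =>
          refine ⟨t', [], fun m => updMap (g m) t'.1 η tt, fun h r => ?_⟩
          rw [hrun, H h r]
          simp [fACtx, putA]
        | cons c l' =>
          refine ⟨t', (c.1, updMap c.2 t'.1 η tt) :: l', g, fun h r => ?_⟩
          rw [hrun, H h r]
          simp [fACtx, putA]
      | succ n =>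
        refine ⟨(t'.1, updMap t'.2 (n+1) η tt), l, g, fun h r => ?_⟩
        rw [hrun, H h r]
        cases l with
        | nil => simp [fACtx, putA]
        | cons c l' => simp [fACtx, putA]
    | readAttr i η tt => exact ⟨t', l, g, fun h r => by rw [hrun, H h r]; rfl⟩
    | copyAttr i1 η1 i2 η2 =>
      exact absurd rfl ((hncp (Act.copyAttr i1 η1 i2 η2) (by simp)).1 _ _ _ _)
    | checkAttrType i η tt => exact ⟨t', l, g, fun h r => by rw [hrun, H h r]; rfl⟩
    | propagateAttrs => exact absurd rfl ((hncp Act.propagateAttrs (by simp)).2)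
    | beginEvalMetaAction j => exact ⟨t', l, g, fun h r => by rw [hrun, H h r]; rfl⟩
    | endEvalMetaAction => exact ⟨t', l, g, fun h r => by rw [hrun, H h r]; rfl⟩
    | enterCtx j =>
      refine ⟨emptyCtx j, t' :: l, g, fun h r => ?_⟩
      rw [hrun, H h r]
      rfl
    | leaveCtx => exact (ha rfl).elim
    | nop => exact ⟨t', l, g, fun h r => by rw [hrun, H h r]; rfl⟩
    | ignoreBranchAction => exact ⟨t', l, g, fun h r => by rw [hrun, H h r]; rfl⟩
  | @wrap b j hb ih =>
    intro hncp t
    have hncpb : ∀ x ∈ b, NotCopyProp x := fun x hx => hncp x (by simp [hx])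
    obtain ⟨t', l, g, H⟩ := ih hncpb (emptyCtx j)
    have hrun : ∀ S : Stk I T, runActs (.enterCtx j :: (b ++ [.leaveCtx])) S
        = popA (runActs b (fACtx S (.enterCtx j))) := fun S => by
      show runActs (b ++ [.leaveCtx]) _ = _
      rw [runActs_append]; rfl
    cases l with
    | nil =>
      refine ⟨(t.1, g t.2), [], id, fun h r => ?_⟩
      rw [hrun]
      have e : fACtx (t, h :: r) (Act.enterCtx j) = (emptyCtx j, t :: h :: r) := rfl
      rw [e, H t (h :: r)]
      simp [popA]
    | cons c l' =>
      refine ⟨c, l' ++ [(t.1, g t.2)], id, fun h r => ?_⟩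
      rw [hrun]
      have e : fACtx (t, h :: r) (Act.enterCtx j) = (emptyCtx j, t :: h :: r) := rfl
      rw [e, H t (h :: r)]
      simp [popA]

/-- Property 7: let `v_sep` be a vertex labeled
`a_node(v_sep) = EnterCtx(i)` for some `i`, and let `w` be a balanced path
prefix containing no vertex labeled `CopyAttr` or `PropagateAttrs`.  Then for
*all* production context stacks `C₁, C₂ ∈ 𝒞` (with no hypothesis relating `C₁`
and `C₂`), `head(f_pCtx(v_sep·w·v_sep, C₁)) = head(f_pCtx(v_sep·w·v_sep, C₂))`. -/
theorem head_fPCtx_sep_sep (aNode : V → Act I T) (vSep : V) (i : ℕ)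
    (hsep : aNode vSep = Act.enterCtx i)
    (w : List V) (hbal : IsBalPrefix (w.map aNode))
    (hncp : ∀ v ∈ w, NotCopyProp (aNode v))
    (C₁ C₂ : Stk I T) :
    headC (fPCtx aNode (vSep :: (w ++ [vSep])) C₁) =
      headC (fPCtx aNode (vSep :: (w ++ [vSep])) C₂) := by
  obtain ⟨t', l, g, H⟩ := key_runActs hbal (fun a ha => by
    obtain ⟨v, hv, rfl⟩ := List.mem_map.1 ha
    exact hncp v hv) (emptyCtx i)
  have step : ∀ C : Stk I T, fPCtx aNode (vSep :: (w ++ [vSep])) C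
      = (emptyCtx i, t' :: (l ++ (C.1.1, g C.1.2) :: C.2)) := by
    intro C
    rw [fPCtx_eq_runActs]
    have e1 : (vSep :: (w ++ [vSep])).map aNode
        = Act.enterCtx i :: (w.map aNode ++ [Act.enterCtx i]) := by
      simp [hsep]
    rw [e1]
    have e2 : runActs (Act.enterCtx i :: (w.map aNode ++ [Act.enterCtx i])) C
        = fACtx (runActs (w.map aNode) (emptyCtx i, C.1 :: C.2)) (.enterCtx i) := by
      show runActs (w.map aNode ++ [Act.enterCtx i]) _ = _
      rw [runActs_append]; rfl
    rw [e2, H C.1 C.2]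
    rfl
  rw [step C₁, step C₂]
  rfl
end

section
/- Let v_sep be a vertex labeled a_node(v_sep) = EnterCtx(i) for some i ∈ ℕ, and let w₁, w₂ be balanced path prefixes containing no vertex labeled CopyAttr or PropagateAttrs. Then for every production context stack C ∈ 𝒞, head(f_pCtx(v_sep·w₁·v_sep·w₂·v_sep, C)) = head(f_pCtx(v_sep·w₂·v_sep, C)). -/
variable {I T : Type} [DecidableEq I]

variable {V : Type}

section Aux

lemma fPCtx_append (f : V → Act I T) (w₁ w₂ : List V) (C : Stk I T) :
    fPCtx f (w₁ ++ w₂) C = fPCtx f w₂ (fPCtx f w₁ C) := by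
  induction w₁ generalizing C with
  | nil => rfl
  | cons v w ih => simp [fPCtx, ih]

lemma fPCtx_map (f : V → Act I T) (w : List V) (C : Stk I T) :
    fPCtx f w C = fPCtx id (w.map f) C := by
  induction w generalizing C with
  | nil => rfl
  | cons v w ih => simp [fPCtx, ih]

lemma key_lemma {b : List (Act I T)} (hb : IsBalPrefix b) :
    (∀ a ∈ b, NotCopyProp a) → ∀ t : ProdCtx I T,
    ∃ (t' : ProdCtx I T) (s' : List (ProdCtx I T)) (g : AttrMap I T → AttrMap I T),
      ∀ (c : ProdCtx I T) (rest : List (ProdCtx I T)),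
        fPCtx id b (t, c :: rest) = (t', s' ++ (c.1, g c.2) :: rest) := by
  induction hb with
  | nil => exact fun _ t => ⟨t, [], id, fun c rest => by simp [fPCtx]⟩
  | @cons b a hb ha ih =>
    intro hn t
    have ihb := ih (fun x hx => hn x (List.mem_cons_of_mem a hx))
    have hna := hn a List.mem_cons_self
    cases a with
    | writeAttr j η τ =>
      rcases Nat.eq_zero_or_pos j with hj | hj
      · subst hj
        obtain ⟨t', s', g, h⟩ := ihb t
        exact ⟨t', s', fun m => g (updMap m t.1 η τ), fun c rest => by
          simpa [fPCtx, fACtx, putA] using h (c.1, updMap c.2 t.1 η τ) rest⟩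
      · obtain ⟨t', s', g, h⟩ := ihb (t.1, updMap t.2 j η τ)
        refine ⟨t', s', g, fun c rest => ?_⟩
        have hj' : j ≠ 0 := Nat.pos_iff_ne_zero.mp hj
        simpa [fPCtx, fACtx, putA, hj'] using h c rest
    | enterCtx j =>
      obtain ⟨t', s', g, h⟩ := ihb (emptyCtx j)
      refine ⟨t', s' ++ [(t.1, g t.2)], id, fun c rest => ?_⟩
      simpa [fPCtx, fACtx, pushA, List.append_assoc] using h t (c :: rest)
    | leaveCtx => exact absurd rfl ha
    | copyAttr a1 a2 a3 a4 => exact absurd rfl (hna.1 a1 a2 a3 a4)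
    | propagateAttrs => exact absurd rfl hna.2
    | readAttr j η τ =>
      obtain ⟨t', s', g, h⟩ := ihb t
      exact ⟨t', s', g, fun c rest => by simpa [fPCtx, fACtx] using h c rest⟩
    | checkAttrType j η τ =>
      obtain ⟨t', s', g, h⟩ := ihb t
      exact ⟨t', s', g, fun c rest => by simpa [fPCtx, fACtx] using h c rest⟩
    | beginEvalMetaAction j =>
      obtain ⟨t', s', g, h⟩ := ihb t
      exact ⟨t', s', g, fun c rest => by simpa [fPCtx, fACtx] using h c rest⟩
    | endEvalMetaAction =>
      obtain ⟨t', s', g, h⟩ := ihb t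
      exact ⟨t', s', g, fun c rest => by simpa [fPCtx, fACtx] using h c rest⟩
    | nop =>
      obtain ⟨t', s', g, h⟩ := ihb t
      exact ⟨t', s', g, fun c rest => by simpa [fPCtx, fACtx] using h c rest⟩
    | ignoreBranchAction =>
      obtain ⟨t', s', g, h⟩ := ihb t
      exact ⟨t', s', g, fun c rest => by simpa [fPCtx, fACtx] using h c rest⟩
  | @snoc b a hb ha ih =>
    intro hn t
    obtain ⟨t', s', g, h⟩ := ih (fun x hx => hn x (List.mem_append_left _ hx)) t
    have hna : NotCopyProp a := hn a (List.mem_append_right _ (List.mem_singleton_self a))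
    have hstep : ∀ c rest, fPCtx id (b ++ [a]) (t, c :: rest)
        = fACtx (t', s' ++ (c.1, g c.2) :: rest) a := by
      intro c rest
      rw [fPCtx_append, h]; rfl
    cases a with
    | writeAttr j η τ =>
      rcases Nat.eq_zero_or_pos j with hj | hj
      · subst hj
        cases s' with
        | nil =>
          exact ⟨t', [], fun m => updMap (g m) t'.1 η τ, fun c rest => by
            rw [hstep]; simp [fACtx, putA]⟩
        | cons x s'' =>
          exact ⟨t', (x.1, updMap x.2 t'.1 η τ) :: s'', g, fun c rest => by
            rw [hstep]; simp [fACtx, putA]⟩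
      · have hj' : j ≠ 0 := Nat.pos_iff_ne_zero.mp hj
        cases s' with
        | nil =>
          exact ⟨(t'.1, updMap t'.2 j η τ), [], g, fun c rest => by
            rw [hstep]; simp [fACtx, putA, hj']⟩
        | cons x s'' =>
          exact ⟨(t'.1, updMap t'.2 j η τ), x :: s'', g, fun c rest => by
            rw [hstep]; simp [fACtx, putA, hj']⟩
    | enterCtx j =>
      exact ⟨emptyCtx j, t' :: s', g, fun c rest => by rw [hstep]; simp [fACtx, pushA]⟩
    | leaveCtx => exact absurd rfl ha
    | copyAttr a1 a2 a3 a4 => exact absurd rfl (hna.1 a1 a2 a3 a4)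
    | propagateAttrs => exact absurd rfl hna.2
    | readAttr j η τ => exact ⟨t', s', g, fun c rest => by rw [hstep]; rfl⟩
    | checkAttrType j η τ => exact ⟨t', s', g, fun c rest => by rw [hstep]; rfl⟩
    | beginEvalMetaAction j => exact ⟨t', s', g, fun c rest => by rw [hstep]; rfl⟩
    | endEvalMetaAction => exact ⟨t', s', g, fun c rest => by rw [hstep]; rfl⟩
    | nop => exact ⟨t', s', g, fun c rest => by rw [hstep]; rfl⟩
    | ignoreBranchAction => exact ⟨t', s', g, fun c rest => by rw [hstep]; rfl⟩
  | @wrap b j hb ih =>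
    intro hn t
    obtain ⟨t', s', g, h⟩ := ih
      (fun x hx => hn x (List.mem_cons_of_mem _ (List.mem_append_left _ hx))) (emptyCtx j)
    have hstep : ∀ c rest,
        fPCtx id (Act.enterCtx j :: (b ++ [Act.leaveCtx])) (t, c :: rest)
          = popA (t', s' ++ (t.1, g t.2) :: c :: rest) := by
      intro c rest
      show fPCtx id (b ++ [Act.leaveCtx]) (fACtx (t, c :: rest) (Act.enterCtx j)) = _
      have : fACtx (t, c :: rest) (Act.enterCtx j) = (emptyCtx j, t :: c :: rest) := rfl
      rw [this, fPCtx_append, h t (c :: rest)]; rfl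
    cases s' with
    | nil =>
      exact ⟨(t.1, g t.2), [], id, fun c rest => by rw [hstep]; simp [popA]⟩
    | cons x s'' =>
      exact ⟨x, s'' ++ [(t.1, g t.2)], id, fun c rest => by
        rw [hstep]; simp [popA, List.append_assoc]⟩

end Aux

/-- Property 8: let `v_sep` be a vertex labeled
`a_node(v_sep) = EnterCtx(i)` for some `i`, and let `w₁, w₂` be balanced path
prefixes containing no vertex labeled `CopyAttr` or `PropagateAttrs`.  Then for
every production context stack `C ∈ 𝒞`,
`head(f_pCtx(v_sep·w₁·v_sep·w₂·v_sep, C)) = head(f_pCtx(v_sep·w₂·v_sep, C))`. -/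
theorem head_fPCtx_drop_first_segment (aNode : V → Act I T) (vSep : V) (i : ℕ)
    (hsep : aNode vSep = Act.enterCtx i)
    (w₁ w₂ : List V)
    (hbal₁ : IsBalPrefix (w₁.map aNode)) (hbal₂ : IsBalPrefix (w₂.map aNode))
    (hncp₁ : ∀ v ∈ w₁, NotCopyProp (aNode v))
    (hncp₂ : ∀ v ∈ w₂, NotCopyProp (aNode v))
    (C : Stk I T) :
    headC (fPCtx aNode (vSep :: (w₁ ++ vSep :: (w₂ ++ [vSep]))) C) =
      headC (fPCtx aNode (vSep :: (w₂ ++ [vSep])) C) := by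
  obtain ⟨t₁, s₁, g₁, h₁⟩ := key_lemma hbal₁
    (fun a ha => by
      obtain ⟨v, hv, rfl⟩ := List.mem_map.mp ha
      exact hncp₁ v hv) (emptyCtx i)
  obtain ⟨t₂, s₂, g₂, h₂⟩ := key_lemma hbal₂
    (fun a ha => by
      obtain ⟨v, hv, rfl⟩ := List.mem_map.mp ha
      exact hncp₂ v hv) (emptyCtx i)
  have hpush : fACtx C (aNode vSep) = (emptyCtx i, C.1 :: C.2) := by
    rw [hsep]; rfl
  have hL : fPCtx aNode (vSep :: (w₁ ++ vSep :: (w₂ ++ [vSep]))) C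
      = (emptyCtx i, t₂ :: (s₂ ++ (t₁.1, g₂ t₁.2) :: (s₁ ++ (C.1.1, g₁ C.1.2) :: C.2))) := by
    show fPCtx aNode (w₁ ++ vSep :: (w₂ ++ [vSep])) (fACtx C (aNode vSep)) = _
    rw [hpush, fPCtx_append, fPCtx_map aNode w₁, h₁ C.1 C.2]
    show fPCtx aNode (w₂ ++ [vSep])
        (fACtx (t₁, s₁ ++ (C.1.1, g₁ C.1.2) :: C.2) (aNode vSep)) = _
    have hpush' : fACtx (t₁, s₁ ++ (C.1.1, g₁ C.1.2) :: C.2) (aNode vSep)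
        = (emptyCtx i, t₁ :: (s₁ ++ (C.1.1, g₁ C.1.2) :: C.2)) := by
      rw [hsep]; rfl
    rw [hpush', fPCtx_append, fPCtx_map aNode w₂,
      h₂ t₁ (s₁ ++ (C.1.1, g₁ C.1.2) :: C.2)]
    show fACtx _ (aNode vSep) = _
    rw [hsep]; rfl
  have hR : fPCtx aNode (vSep :: (w₂ ++ [vSep])) C
      = (emptyCtx i, t₂ :: (s₂ ++ (C.1.1, g₂ C.1.2) :: C.2)) := by
    show fPCtx aNode (w₂ ++ [vSep]) (fACtx C (aNode vSep)) = _
    rw [hpush, fPCtx_append, fPCtx_map aNode w₂, h₂ C.1 C.2]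
    show fACtx _ (aNode vSep) = _
    rw [hsep]; rfl
  rw [hL, hR]
  rfl
end
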